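/- arXiv:math/0501176 — 2 statements merged into one kernel-verified Lean document; each statement's English description precedes it below -/
import Mathlib

section
/- Let a = (a₁, a₂) with a₁ ≥ a₂ ≥ 0 and b be a content vector with |b| = a₁ + a₂. Set λ = (a₁ + a₂, a₂). There is a bijection between the set of semistandard Young tableaux of content b whose shape λ̌ is a two-row partition dominating a, and the set of semistandard Young tableaux of shape λ and content (b₁, …, b_k, a₂), given by appending the entry k+1 to all cells of λ not in λ̌. -/
open Finset

/-- The two-row Young diagram with row lengths `l1` (top) and `l2` (bottom).
In intended uses `l2 ≤ l1`. -/
def twoRow (l1 l2 : ℕ) : YoungDiagram :=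
  YoungDiagram.ofRowLens [max l1 l2, l2] (by
    simp [List.sortedGE_iff_pairwise, le_max_right])

/-- The number of cells of `T` with entry `v` (entries are 0-indexed). -/
def content {sh : YoungDiagram} (T : SemistandardYoungTableau sh) (v : ℕ) : ℕ :=
  (sh.cells.filter fun c => T c.1 c.2 = v).card

/-- Kostka number: the number of semistandard Young tableaux of shape `sh`
with content `c` (entries 0-indexed: `c v` copies of entry `v`). -/
noncomputable def kostka (sh : YoungDiagram) (c : ℕ → ℕ) : ℕ :=
  Nat.card {T : SemistandardYoungTableau sh // ∀ v, content T v = c v}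

/-- A skew semistandard tableau on the skew shape whose `i`-th row occupies
columns `[lo i, lo i + len i)`: rows weakly increase, columns strictly increase,
entries vanish off the shape. -/
structure SkewTab (lo len : ℕ → ℕ) where
  entry : ℕ → ℕ → ℕ
  rowWeak : ∀ i j1 j2, lo i ≤ j1 → j1 ≤ j2 → j2 < lo i + len i → entry i j1 ≤ entry i j2
  colStrict : ∀ i j, lo i ≤ j → j < lo i + len i → lo (i + 1) ≤ j →
    j < lo (i + 1) + len (i + 1) → entry i j < entry (i + 1) j
  zeros : ∀ i j, ¬(lo i ≤ j ∧ j < lo i + len i) → entry i j = 0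

/-- The reading word: each row read right to left, rows top to bottom. -/
def readWord (lo len : ℕ → ℕ) (rows : ℕ) (T : SkewTab lo len) : List ℕ :=
  (List.range rows).flatMap fun i =>
    (List.range (len i)).reverse.map fun t => T.entry i (lo i + t)

/-- A word is a lattice word: every prefix has at least as many `v`'s as `(v+1)`'s. -/
def IsLattice (w : List ℕ) : Prop := ∀ n v, (w.take n).count (v + 1) ≤ (w.take n).count v

/-- Number of copies of `v` in row `i` of the skew tableau `T`. -/
def rowContent (lo len : ℕ → ℕ) (T : SkewTab lo len) (i v : ℕ) : ℕ :=
  ((Finset.Ico (lo i) (lo i + len i)).filter fun j => T.entry i j = v).card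

/-- Total number of copies of `v` in the skew tableau `T` (with `rows` rows). -/
def skewContent (lo len : ℕ → ℕ) (rows : ℕ) (T : SkewTab lo len) (v : ℕ) : ℕ :=
  ∑ i ∈ Finset.range rows, rowContent lo len T i v

/-- Left endpoints of the rows of the skew shape `λ*α` where `λ = (l1, l2)` and
`α` has `m` rows: the `m` rows of `α` start at column `l1`, the two rows of `λ` at column 0. -/
def starLo (l1 m : ℕ) (i : ℕ) : ℕ := if i < m then l1 else 0

/-- Row lengths of the skew shape `λ*α`, `λ = (l1, l2)`, `α` with `m` rows. -/
def starLen (l1 l2 : ℕ) (a : ℕ → ℕ) (m : ℕ) (i : ℕ) : ℕ :=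
  if i < m then a i else if i = m then l1 else if i = m + 1 then l2 else 0

/-!
Every entry of a tableau of content `b` is below `k`, and every entry of a tableau of content
`(b, a₂)` is at most `k`. Hence extending by `k` along a horizontal strip `λ / λ̌` is undone by
restricting to the cells with entry below `k`, and these cells always form a Young diagram. For
two rows, `λ / λ̌` is a horizontal strip since `λ̌₁ ≥ a₁ ≥ a₂ = λ₂`, and the number of entries `k`
is `|λ| - |λ̌| = a₂`; conversely this count and `λ̌₂ ≤ λ₂` force `λ̌` to dominate `a`.
-/

/-- No two cells of `ν / μ` share a column. -/
def YoungDiagram.IsHorizontalStrip (μ ν : YoungDiagram) : Prop :=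
  μ ≤ ν ∧ ∀ i j, (i + 1, j) ∈ ν → (i, j) ∈ μ

namespace SemistandardYoungTableau

variable {μ ν : YoungDiagram}

theorem entry_mono (T : SemistandardYoungTableau ν) {i i' j j' : ℕ} (hi : i' ≤ i) (hj : j' ≤ j)
    (hcell : (i, j) ∈ ν) : T i' j' ≤ T i j :=
  (T.col_weak hi (ν.up_left_mem le_rfl hj hcell)).trans (T.row_weak_of_le hj hcell)

theorem content_entry_ne_zero (T : SemistandardYoungTableau ν) {i j : ℕ} (hcell : (i, j) ∈ ν) :
    content T (T i j) ≠ 0 :=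
  card_ne_zero_of_mem (mem_filter.2 ⟨hcell, rfl⟩)

theorem entry_lt_of_content_eq_zero (T : SemistandardYoungTableau ν) {k : ℕ}
    (hT : ∀ v, k ≤ v → content T v = 0) {i j : ℕ} (hcell : (i, j) ∈ ν) : T i j < k :=
  Nat.lt_of_not_le fun h => T.content_entry_ne_zero hcell (hT _ h)

def restrict (T : SemistandardYoungTableau ν) (h : μ ≤ ν) : SemistandardYoungTableau μ where
  entry i j := if (i, j) ∈ μ then T i j else 0
  row_weak' hj hcell := by
    rw [if_pos (μ.up_left_mem le_rfl hj.le hcell), if_pos hcell]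
    exact T.row_weak hj (h hcell)
  col_strict' hi hcell := by
    rw [if_pos (μ.up_left_mem hi.le le_rfl hcell), if_pos hcell]
    exact T.col_strict hi (h hcell)
  zeros' hn := if_neg hn

theorem restrict_apply (T : SemistandardYoungTableau ν) (h : μ ≤ ν) (i j : ℕ) :
    T.restrict h i j = if (i, j) ∈ μ then T i j else 0 :=
  rfl

def extend (T : SemistandardYoungTableau μ) (k : ℕ) (hstrip : μ.IsHorizontalStrip ν)
    (hk : ∀ i j, (i, j) ∈ μ → T i j < k) : SemistandardYoungTableau ν where
  entry i j := if (i, j) ∈ μ then T i j else if (i, j) ∈ ν then k else 0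
  row_weak' {i j1 j2} hj hcell := by
    by_cases h2 : (i, j2) ∈ μ
    · rw [if_pos (μ.up_left_mem le_rfl hj.le h2), if_pos h2]
      exact T.row_weak hj h2
    · rw [if_neg h2, if_pos hcell]
      split_ifs with h1
      exacts [(hk _ _ h1).le, le_rfl, Nat.zero_le k]
  col_strict' {i1 i2 j} hi hcell := by
    have h1 : (i1, j) ∈ μ := hstrip.2 _ _ (ν.up_left_mem hi le_rfl hcell)
    rw [if_pos h1]
    split_ifs with h2
    exacts [T.col_strict hi h2, hk _ _ h1]
  zeros' {i j} hn := by
    rw [if_neg fun h => hn (hstrip.1 h), if_neg hn]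

theorem extend_apply (T : SemistandardYoungTableau μ) (k : ℕ) (hstrip : μ.IsHorizontalStrip ν)
    (hk : ∀ i j, (i, j) ∈ μ → T i j < k) (i j : ℕ) :
    T.extend k hstrip hk i j = if (i, j) ∈ μ then T i j else if (i, j) ∈ ν then k else 0 :=
  rfl

theorem restrict_extend (T : SemistandardYoungTableau μ) (k : ℕ) (hstrip : μ.IsHorizontalStrip ν)
    (hk : ∀ i j, (i, j) ∈ μ → T i j < k) : (T.extend k hstrip hk).restrict hstrip.1 = T := by
  ext i j
  rw [restrict_apply, extend_apply]
  split_ifs with h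
  · rfl
  · exact (T.zeros h).symm

theorem content_extend (T : SemistandardYoungTableau μ) (k : ℕ) (hstrip : μ.IsHorizontalStrip ν)
    (hk : ∀ i j, (i, j) ∈ μ → T i j < k) (v : ℕ) :
    content (T.extend k hstrip hk) v =
      content T v + if v = k then (ν.cells \ μ.cells).card else 0 := by
  classical
  have hsplit := union_sdiff_of_subset (YoungDiagram.cells_subset_iff.2 hstrip.1)
  rw [content]
  nth_rw 1 [← hsplit]
  rw [filter_union, card_union_of_disjoint
    (disjoint_sdiff.mono (filter_subset _ _) (filter_subset _ _))]
  congr 1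
  · refine congrArg card (filter_congr fun ⟨i, j⟩ hc => ?_)
    change T.extend k hstrip hk i j = v ↔ T i j = v
    rw [extend_apply, if_pos (show (i, j) ∈ μ from hc)]
  · rw [filter_congr (q := fun _ => k = v) fun ⟨i, j⟩ hc => by
      change T.extend k hstrip hk i j = v ↔ k = v
      rw [mem_sdiff] at hc
      rw [extend_apply, if_neg (show (i, j) ∉ μ from hc.2), if_pos (show (i, j) ∈ ν from hc.1)],
    filter_const]
    rcases eq_or_ne v k with rfl | hv
    · simp
    · simp [hv, hv.symm]

/-- A lower set because entries weakly increase along rows and down columns. -/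
def cellsLT (T : SemistandardYoungTableau ν) (k : ℕ) : YoungDiagram where
  cells := ν.cells.filter fun c => T c.1 c.2 < k
  isLowerSet := by
    rintro ⟨i, j⟩ ⟨i', j'⟩ ⟨hi, hj⟩ hc
    simp only [coe_filter, YoungDiagram.mem_cells, Set.mem_ofPred_eq] at hc ⊢
    exact ⟨ν.up_left_mem hi hj hc.1, (T.entry_mono hi hj hc.1).trans_lt hc.2⟩

theorem mem_cellsLT (T : SemistandardYoungTableau ν) (k : ℕ) {i j : ℕ} :
    (i, j) ∈ T.cellsLT k ↔ (i, j) ∈ ν ∧ T i j < k :=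
  mem_filter

theorem cellsLT_le (T : SemistandardYoungTableau ν) (k : ℕ) : T.cellsLT k ≤ ν :=
  fun _ hc => (mem_filter.1 hc).1

theorem cellsLT_extend (T : SemistandardYoungTableau μ) (k : ℕ) (hstrip : μ.IsHorizontalStrip ν)
    (hk : ∀ i j, (i, j) ∈ μ → T i j < k) : (T.extend k hstrip hk).cellsLT k = μ := by
  ext ⟨i, j⟩
  rw [YoungDiagram.mem_cells, YoungDiagram.mem_cells, mem_cellsLT, extend_apply]
  by_cases h : (i, j) ∈ μ
  · simp [h, hstrip.1 h, hk _ _ h]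
  · by_cases hν : (i, j) ∈ ν <;> simp [h, hν]

theorem card_sdiff_cellsLT (T : SemistandardYoungTableau ν) {k : ℕ}
    (hk : ∀ i j, (i, j) ∈ ν → T i j ≤ k) :
    (ν.cells \ (T.cellsLT k).cells).card = content T k := by
  refine congrArg card (Finset.ext fun ⟨i, j⟩ => ?_)
  rw [mem_sdiff, mem_filter, YoungDiagram.mem_cells, YoungDiagram.mem_cells,
    mem_cellsLT]
  by_cases hν : (i, j) ∈ ν
  · have := hk _ _ hν
    simp only [hν, true_and]
    omega
  · simp [hν]

theorem content_restrict_cellsLT (T : SemistandardYoungTableau ν) {k : ℕ} (h : μ ≤ ν)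
    (hμ : μ = T.cellsLT k) (v : ℕ) :
    content (T.restrict h) v = if v < k then content T v else 0 := by
  subst hμ
  rw [content, content]
  split_ifs with hv
  · refine congrArg card (Finset.ext fun ⟨i, j⟩ => ?_)
    simp only [mem_filter, YoungDiagram.mem_cells, mem_cellsLT, restrict_apply]
    aesop
  · refine card_eq_zero.2 (filter_eq_empty_iff.2 fun ⟨i, j⟩ hc => ?_)
    change ¬(T.restrict _ i j = v)
    rw [restrict_apply, if_pos (show (i, j) ∈ T.cellsLT k from hc)]
    have := ((T.mem_cellsLT k).1 hc).2
    omega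

theorem restrict_lt_of_eq_cellsLT (T : SemistandardYoungTableau ν) {k : ℕ} (h : μ ≤ ν)
    (hμ : μ = T.cellsLT k) (i j : ℕ) (hc : (i, j) ∈ μ) : T.restrict h i j < k := by
  subst hμ
  rw [restrict_apply, if_pos hc]
  exact ((T.mem_cellsLT k).1 hc).2

theorem extend_restrict_cellsLT (T : SemistandardYoungTableau ν) {k : ℕ}
    (hk : ∀ i j, (i, j) ∈ ν → T i j ≤ k) (hμ : μ = T.cellsLT k) (hstrip : μ.IsHorizontalStrip ν) :
    (T.restrict hstrip.1).extend k hstrip (T.restrict_lt_of_eq_cellsLT hstrip.1 hμ) = T := by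
  subst hμ
  ext i j
  rw [extend_apply, restrict_apply]
  by_cases hμ : (i, j) ∈ T.cellsLT k
  · rw [if_pos hμ, if_pos hμ]
  · rw [if_neg hμ]
    split_ifs with hν
    · have := not_and.1 ((T.mem_cellsLT k).not.1 hμ) hν
      have := hk _ _ hν
      omega
    · exact (T.zeros hν).symm

end SemistandardYoungTableau

section TwoRow

open YoungDiagram

theorem mem_twoRow {l1 l2 i j : ℕ} (h : l2 ≤ l1) :
    (i, j) ∈ twoRow l1 l2 ↔ (i = 0 ∧ j < l1) ∨ (i = 1 ∧ j < l2) := by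
  rw [twoRow, mem_ofRowLens, max_eq_left h]
  constructor
  · rintro ⟨hi, hj⟩
    simp only [List.length_cons, List.length_nil] at hi
    interval_cases i <;> simp_all
  · rintro (⟨rfl, hj⟩ | ⟨rfl, hj⟩) <;> exact ⟨by simp, by simpa⟩

theorem rowLen_twoRow_zero (l1 l2 : ℕ) : (twoRow l1 l2).rowLen 0 = max l1 l2 :=
  rowLen_ofRowLens (w := [max l1 l2, l2]) ⟨0, by simp⟩

theorem rowLen_twoRow_one (l1 l2 : ℕ) : (twoRow l1 l2).rowLen 1 = l2 :=
  rowLen_ofRowLens (w := [max l1 l2, l2]) ⟨1, by simp⟩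

theorem rowLen_le_rowLen {μ ν : YoungDiagram} (h : μ ≤ ν) (i : ℕ) : μ.rowLen i ≤ ν.rowLen i :=
  Nat.le_of_not_lt fun hlt => lt_irrefl _ (mem_iff_lt_rowLen.1 (h (mem_iff_lt_rowLen.2 hlt)))

theorem card_twoRow {l1 l2 : ℕ} (h : l2 ≤ l1) : (twoRow l1 l2).cells.card = l1 + l2 := by
  have hcells : (twoRow l1 l2).cells = {0} ×ˢ range l1 ∪ {1} ×ˢ range l2 := by
    ext ⟨i, j⟩
    simp only [mem_cells, mem_twoRow h, mem_union, mem_product, mem_singleton, mem_range]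
  rw [hcells, card_union_of_disjoint (by simp [disjoint_left]), card_product, card_product]
  simp

theorem eq_twoRow_rowLen {μ : YoungDiagram} {l1 l2 : ℕ} (h : l2 ≤ l1) (hμ : μ ≤ twoRow l1 l2) :
    μ = twoRow (μ.rowLen 0) (μ.rowLen 1) := by
  ext ⟨i, j⟩
  rw [mem_cells, mem_cells, mem_twoRow (μ.rowLen_anti 0 1 zero_le_one)]
  constructor
  · intro hc
    rcases (mem_twoRow h).1 (hμ hc) with ⟨rfl, -⟩ | ⟨rfl, -⟩
    · exact Or.inl ⟨rfl, mem_iff_lt_rowLen.1 hc⟩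
    · exact Or.inr ⟨rfl, mem_iff_lt_rowLen.1 hc⟩
  · rintro (⟨rfl, hj⟩ | ⟨rfl, hj⟩) <;> exact mem_iff_lt_rowLen.2 hj

theorem isHorizontalStrip_twoRow {c1 c2 l1 l2 : ℕ} (hc : c2 ≤ c1) (hl : l2 ≤ l1) (h1 : c1 ≤ l1)
    (h2 : c2 ≤ l2) (hstrip : l2 ≤ c1) : (twoRow c1 c2).IsHorizontalStrip (twoRow l1 l2) := by
  refine ⟨fun ⟨i, j⟩ hcell => ?_, fun i j hcell => ?_⟩
  · rw [mem_twoRow hc] at hcell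
    rw [mem_twoRow hl]
    omega
  · rw [mem_twoRow hl] at hcell
    rw [mem_twoRow hc]
    omega

end TwoRow

section Extension

open YoungDiagram SemistandardYoungTableau

variable {a1 a2 k : ℕ} {b : Fin k → ℕ}

def extendTwoRow (ha : a2 ≤ a1)
    (p : Σ c : {c : ℕ × ℕ // c.2 ≤ c.1 ∧ c.1 + c.2 = a1 + a2 ∧ a1 ≤ c.1},
      {T : SemistandardYoungTableau (twoRow c.1.1 c.1.2) //
        ∀ v, content T v = if h : v < k then b ⟨v, h⟩ else 0}) :
    {T : SemistandardYoungTableau (twoRow (a1 + a2) a2) //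
      ∀ v, content T v = if h : v < k then b ⟨v, h⟩ else if v = k then a2 else 0} :=
  have hc := p.1.2
  have hstrip : (twoRow p.1.1.1 p.1.1.2).IsHorizontalStrip (twoRow (a1 + a2) a2) :=
    isHorizontalStrip_twoRow hc.1 (Nat.le_add_left a2 a1) (by omega) (by omega) (by omega)
  ⟨p.2.1.extend k hstrip
      fun _ _ => p.2.1.entry_lt_of_content_eq_zero fun v hv => by rw [p.2.2, dif_neg (by omega)],
    fun v => by
      rw [content_extend, p.2.2, card_sdiff_of_subset (cells_subset_iff.2 hstrip.1),
        card_twoRow (Nat.le_add_left a2 a1), card_twoRow p.1.2.1]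
      split_ifs <;> omega⟩

theorem extendTwoRow_apply (ha : a2 ≤ a1)
    (p : Σ c : {c : ℕ × ℕ // c.2 ≤ c.1 ∧ c.1 + c.2 = a1 + a2 ∧ a1 ≤ c.1},
      {T : SemistandardYoungTableau (twoRow c.1.1 c.1.2) //
        ∀ v, content T v = if h : v < k then b ⟨v, h⟩ else 0}) {i j : ℕ}
    (hij : (i, j) ∈ twoRow (a1 + a2) a2) :
    (extendTwoRow ha p : SemistandardYoungTableau (twoRow (a1 + a2) a2)) i j =
      if (i, j) ∈ twoRow p.1.1.1 p.1.1.2 then p.2.1 i j else k := by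
  dsimp only [extendTwoRow]
  rw [extend_apply, if_pos hij]

theorem extendTwoRow_injective (ha : a2 ≤ a1) : Function.Injective (extendTwoRow (b := b) ha) := by
  rintro ⟨⟨⟨c1, c2⟩, hc⟩, T, hT⟩ ⟨⟨⟨d1, d2⟩, hd⟩, S, hS⟩ heq
  obtain ⟨hc21, hcsum, hc1⟩ := hc
  have hshape : twoRow c1 c2 = twoRow d1 d2 := by
    have := congrArg (fun T' => cellsLT (Subtype.val T') k) heq
    simpa only [extendTwoRow, cellsLT_extend] using this
  have h1 : c1 = d1 := by
    simpa [rowLen_twoRow_zero, max_eq_left hc21, max_eq_left hd.1] using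
      congrArg (rowLen · 0) hshape
  have h2 : c2 = d2 := by simpa [rowLen_twoRow_one] using congrArg (rowLen · 1) hshape
  subst h1 h2
  have hTS : T = S := by
    have := congrArg (fun T' => restrict (Subtype.val T')
      (isHorizontalStrip_twoRow hc21 (Nat.le_add_left a2 a1) (by omega) (by omega) (by omega)).1) heq
    simpa only [extendTwoRow, restrict_extend] using this
  subst hTS
  rfl

theorem extendTwoRow_surjective (ha : a2 ≤ a1) :
    Function.Surjective (extendTwoRow (b := b) ha) := by
  rintro ⟨T, hT⟩
  have hle : ∀ i j, (i, j) ∈ twoRow (a1 + a2) a2 → T i j ≤ k := fun _ _ hc =>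
    Nat.lt_succ_iff.1 <| T.entry_lt_of_content_eq_zero
      (fun v hv => by rw [hT, dif_neg (by omega), if_neg (by omega)]) hc
  set μ := T.cellsLT k with hμ_def
  have hμ : μ = twoRow (μ.rowLen 0) (μ.rowLen 1) :=
    eq_twoRow_rowLen (Nat.le_add_left a2 a1) (T.cellsLT_le k)
  have h21 : μ.rowLen 1 ≤ μ.rowLen 0 := μ.rowLen_anti 0 1 zero_le_one
  have h1 : μ.rowLen 0 ≤ a1 + a2 := by
    simpa only [rowLen_twoRow_zero, max_eq_left (Nat.le_add_left a2 a1)] using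
      rowLen_le_rowLen (T.cellsLT_le k) 0
  have h2 : μ.rowLen 1 ≤ a2 := by
    simpa only [rowLen_twoRow_one] using rowLen_le_rowLen (T.cellsLT_le k) 1
  have hsum : μ.rowLen 0 + μ.rowLen 1 = a1 + a2 := by
    have hk := T.card_sdiff_cellsLT hle
    rw [card_sdiff_of_subset (cells_subset_iff.2 (T.cellsLT_le k)), hT k,
      dif_neg (lt_irrefl k), if_pos rfl, card_twoRow (Nat.le_add_left a2 a1), ← hμ_def, hμ,
      card_twoRow h21] at hk
    omega
  have hstrip : (twoRow (μ.rowLen 0) (μ.rowLen 1)).IsHorizontalStrip (twoRow (a1 + a2) a2) :=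
    isHorizontalStrip_twoRow h21 (Nat.le_add_left a2 a1) h1 h2 (by omega)
  refine ⟨⟨⟨(μ.rowLen 0, μ.rowLen 1), h21, hsum, by omega⟩, T.restrict hstrip.1, fun v => ?_⟩,
    Subtype.ext ?_⟩
  · rw [T.content_restrict_cellsLT hstrip.1 hμ.symm, hT]
    split_ifs <;> rfl
  · exact T.extend_restrict_cellsLT hle hμ.symm hstrip

end Extension

theorem stmt4_general (a1 a2 k : ℕ) (ha : a2 ≤ a1) (b : Fin k → ℕ) :
    ∃ e : (Σ c : {c : ℕ × ℕ // c.2 ≤ c.1 ∧ c.1 + c.2 = a1 + a2 ∧ a1 ≤ c.1},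
            {T : SemistandardYoungTableau (twoRow c.1.1 c.1.2) //
              ∀ v, content T v = if h : v < k then b ⟨v, h⟩ else 0}) ≃
          {T : SemistandardYoungTableau (twoRow (a1 + a2) a2) //
            ∀ v, content T v = if h : v < k then b ⟨v, h⟩ else if v = k then a2 else 0},
      ∀ p i j, (i, j) ∈ twoRow (a1 + a2) a2 →
        (e p : SemistandardYoungTableau (twoRow (a1 + a2) a2)) i j =
          if (i, j) ∈ twoRow p.1.1.1 p.1.1.2 then
            (p.2 : SemistandardYoungTableau (twoRow p.1.1.1 p.1.1.2)) i j
          else k :=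
  ⟨Equiv.ofBijective (extendTwoRow ha) ⟨extendTwoRow_injective ha, extendTwoRow_surjective ha⟩,
    fun p _ _ hij => extendTwoRow_apply ha p hij⟩

/-- Extension by the entry `k+1` (0-indexed: `k`) on the cells of
`λ = (a1 + a2, a2)` not in `λ̌` gives a bijection between SSYT of content `b` whose shape
`λ̌` is a two-row partition dominating `a`, and SSYT of shape `λ` with content `(b, a2)`. -/
theorem stmt4 (a1 a2 k : ℕ) (ha : a2 ≤ a1) (b : Fin k → ℕ)
    (hsum : a1 + a2 = ∑ j, b j) :
    ∃ e : (Σ c : {c : ℕ × ℕ // c.2 ≤ c.1 ∧ c.1 + c.2 = a1 + a2 ∧ a1 ≤ c.1},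
            {T : SemistandardYoungTableau (twoRow c.1.1 c.1.2) //
              ∀ v, content T v = if h : v < k then b ⟨v, h⟩ else 0}) ≃
          {T : SemistandardYoungTableau (twoRow (a1 + a2) a2) //
            ∀ v, content T v = if h : v < k then b ⟨v, h⟩ else if v = k then a2 else 0},
      ∀ p i j, (i, j) ∈ twoRow (a1 + a2) a2 →
        (e p : SemistandardYoungTableau (twoRow (a1 + a2) a2)) i j =
          if (i, j) ∈ twoRow p.1.1.1 p.1.1.2 then
            (p.2 : SemistandardYoungTableau (twoRow p.1.1.1 p.1.1.2)) i j
          else k :=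
  stmt4_general a1 a2 k ha b
end

section
/- The map T ↦ S(T) (placing T on the λ-part and filling row i of the α-part with i's) is a bijection between semistandard Young tableaux of shape λ and content μ, and Littlewood-Richardson skew tableaux of shape λ*α and content ν, where λ has two parts, αᵢ = Σ_{j>i} μⱼ, and νᵢ = αᵢ + μᵢ (with ν_ℓ = μ_ℓ). -/
open Finset

/-!
Writing `S(T)` row by row, its reading word is `0^{α₀} 1^{α₁} ⋯` followed by the reading
word of `T`. That prefix is sorted and `α_v = μ_{v+1} + α_{v+1}`, so the `v`s it contains
outnumber all the `v + 1`s of the whole word: `S(T)` is an LR tableau of content `α + μ = ν`.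
Conversely, in an LR tableau of shape `λ*α` row `i` of the `α`-part is forced to consist of
`i`s: column strictness gives entries `≥ i`, and if its rightmost entry `x` (the first one read
in that row) exceeded `i`, the lattice condition would require an `x - 1` among the letters read
before it, all of which are `< i` by induction. Hence deleting the `α`-part inverts `T ↦ S(T)`.
-/

namespace IsLattice

lemma of_pairwise_le {w : List ℕ} (hw : w.Pairwise (· ≤ ·))
    (hcount : ∀ v, w.count (v + 1) ≤ w.count v) : IsLattice w := by
  intro n v
  by_cases hmem : v + 1 ∈ w.take n
  · -- sortedness puts every `v` of `w` before the first `v + 1`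
    have hdrop : (w.drop n).count v = 0 := by
      refine List.count_eq_zero.2 fun hv => ?_
      have hsplit := List.take_append_drop n w ▸ hw
      have := (List.pairwise_append.1 hsplit).2.2 _ hmem _ hv
      omega
    have := hcount v
    rw [← List.take_append_drop n w, List.count_append, List.count_append, hdrop] at this
    omega
  · rw [List.count_eq_zero.2 hmem]
    exact Nat.zero_le _

lemma append {A B : List ℕ} (hA : IsLattice A)
    (hcount : ∀ v, A.count (v + 1) + B.count (v + 1) ≤ A.count v) : IsLattice (A ++ B) := by
  intro n v
  rw [List.take_append]
  by_cases hn : n ≤ A.length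
  · simpa [Nat.sub_eq_zero_of_le hn] using hA n v
  · rw [List.take_of_length_le (by omega), List.count_append, List.count_append]
    have := (List.take_sublist (n - A.length) B).count_le (v + 1)
    have := hcount v
    omega

lemma pred_mem {P R : List ℕ} {x : ℕ} (h : IsLattice (P ++ x :: R)) (hx : 0 < x) :
    x - 1 ∈ P := by
  have hcount := h (P.length + 1) (x - 1)
  rw [List.take_append, List.take_of_length_le (by omega), Nat.add_sub_cancel_left,
    List.count_append, List.count_append, Nat.sub_add_cancel hx] at hcount
  simp only [List.take_succ_cons, List.take_zero, List.count_singleton_self,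
    List.count_singleton, beq_iff_eq, if_neg (show x ≠ x - 1 by omega)] at hcount
  exact List.count_pos_iff.1 (by omega)

end IsLattice

lemma exists_flatMap_range_eq_append {α : Type*} (f : ℕ → List α) {i n : ℕ} (h : i < n) :
    ∃ R, (List.range n).flatMap f = (List.range i).flatMap f ++ (f i ++ R) := by
  obtain ⟨k, rfl⟩ := Nat.exists_eq_add_of_lt h
  refine ⟨((List.range k).map (i + ·.succ)).flatMap f, ?_⟩
  rw [show i + k + 1 = i + (k + 1) by omega, List.range_add, List.flatMap_append,
    List.range_succ_eq_map]
  simp [List.flatMap_map, Function.comp_def]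

lemma count_map_range (f : ℕ → ℕ) (v n : ℕ) :
    ((List.range n).map f).count v = #{t ∈ range n | f t = v} := by
  induction n with
  | zero => simp
  | succ n ih =>
    rw [List.range_succ, List.map_append, List.count_append, ih, range_add_one, filter_insert]
    split_ifs with h <;> simp [h, card_insert_of_notMem]

namespace SkewTab

variable {lo len : ℕ → ℕ}

@[ext]
lemma ext {S S' : SkewTab lo len} (h : ∀ i j, S.entry i j = S'.entry i j) : S = S' := by
  cases S; cases S'; congr; funext i j; exact h i j

lemma le_entry (S : SkewTab lo len) {i j : ℕ} (h : ∀ k ≤ i, lo k ≤ j ∧ j < lo k + len k) :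
    i ≤ S.entry i j := by
  induction i with
  | zero => exact Nat.zero_le _
  | succ i ih =>
    have hstep := S.colStrict i j (h i (by omega)).1 (h i (by omega)).2 (h (i + 1) le_rfl).1
      (h (i + 1) le_rfl).2
    have := ih fun k hk => h k (by omega)
    omega

def rowWord (S : SkewTab lo len) (i : ℕ) : List ℕ :=
  (List.range (len i)).reverse.map fun t => S.entry i (lo i + t)

lemma readWord_eq_flatMap (rows : ℕ) (S : SkewTab lo len) :
    readWord lo len rows S = (List.range rows).flatMap S.rowWord := rfl

lemma count_rowWord (S : SkewTab lo len) (i v : ℕ) :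
    (S.rowWord i).count v = rowContent lo len S i v := by
  rw [rowWord, List.map_reverse, List.count_reverse, count_map_range, rowContent,
    Finset.card_filter, Finset.card_filter, Finset.sum_Ico_eq_sum_range, Nat.add_sub_cancel_left]

lemma count_readWord (rows : ℕ) (S : SkewTab lo len) (v : ℕ) :
    (readWord lo len rows S).count v = skewContent lo len rows S v := by
  induction rows with
  | zero => rfl
  | succ rows ih =>
    rw [readWord_eq_flatMap, List.range_succ, List.flatMap_append, List.count_append,
      ← readWord_eq_flatMap, ih, skewContent, skewContent, Finset.sum_range_succ,
      List.flatMap_singleton, count_rowWord]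

lemma rowWord_eq_replicate (S : SkewTab lo len) {i c : ℕ}
    (h : ∀ j, lo i ≤ j → j < lo i + len i → S.entry i j = c) :
    S.rowWord i = List.replicate (len i) c := by
  rw [List.eq_replicate_iff]
  refine ⟨by simp [rowWord], fun b hb => ?_⟩
  obtain ⟨t, ht, rfl⟩ := List.mem_map.1 hb
  rw [List.mem_reverse, List.mem_range] at ht
  exact h _ (by omega) (by omega)

lemma exists_rowWord_eq_cons (S : SkewTab lo len) {i t : ℕ} (h : len i = t + 1) :
    ∃ R, S.rowWord i = S.entry i (lo i + t) :: R :=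
  ⟨_, by rw [rowWord, h, List.range_succ, List.reverse_append]; rfl⟩

end SkewTab

def alphaWord (a : ℕ → ℕ) (m : ℕ) : List ℕ :=
  (List.range m).flatMap fun k => List.replicate (a k) k

lemma lt_of_mem_alphaWord {a : ℕ → ℕ} {m v : ℕ} (h : v ∈ alphaWord a m) : v < m := by
  obtain ⟨k, hk, hv⟩ := List.mem_flatMap.1 h
  rw [List.eq_of_mem_replicate hv]
  exact List.mem_range.1 hk

lemma pairwise_alphaWord (a : ℕ → ℕ) (m : ℕ) : (alphaWord a m).Pairwise (· ≤ ·) := by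
  refine List.pairwise_flatMap.2 ⟨fun k _ => List.pairwise_replicate.2 (Or.inr le_rfl), ?_⟩
  refine (List.pairwise_lt_range).imp fun hkl x hx y hy => ?_
  rw [List.eq_of_mem_replicate hx, List.eq_of_mem_replicate hy]
  exact hkl.le

lemma count_alphaWord (a : ℕ → ℕ) (m v : ℕ) :
    (alphaWord a m).count v = if v < m then a v else 0 := by
  induction m with
  | zero => simp [alphaWord]
  | succ m ih =>
    rw [alphaWord, List.range_succ, List.flatMap_append, List.count_append, ← alphaWord, ih]
    simp only [List.flatMap_singleton, List.count_replicate, beq_iff_eq]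
    split_ifs <;> subst_vars <;> omega

lemma count_alphaWord_of_vanishing {a : ℕ → ℕ} {m : ℕ} (ha0 : ∀ v, m ≤ v → a v = 0) (v : ℕ) :
    (alphaWord a m).count v = a v := by
  rw [count_alphaWord]
  split_ifs with hv
  · rfl
  · rw [ha0 v (not_lt.1 hv)]

lemma content_twoRow {l1 l2 : ℕ} (T : SemistandardYoungTableau (twoRow l1 l2)) (v : ℕ) :
    content T v = #{j ∈ range (max l1 l2) | T 0 j = v} + #{j ∈ range l2 | T 1 j = v} := by
  have hcells : (twoRow l1 l2).cells = {0} ×ˢ range (max l1 l2) ∪ {1} ×ˢ range l2 := by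
    ext ⟨i, j⟩
    rw [YoungDiagram.mem_cells, twoRow, YoungDiagram.mem_ofRowLens]
    rcases i with _ | _ | i <;> simp
  rw [content, hcells, filter_union, card_union_of_disjoint
    (disjoint_filter_filter (by simp [disjoint_left]))]
  congr 1 <;> simp [filter_map]

section StarShape

variable {l1 l2 m : ℕ} {a mu : ℕ → ℕ}

lemma starLo_of_lt {i : ℕ} (h : i < m) : starLo l1 m i = l1 := if_pos h

lemma starLo_of_le {i : ℕ} (h : m ≤ i) : starLo l1 m i = 0 := if_neg (by omega)

lemma starLen_of_lt {i : ℕ} (h : i < m) : starLen l1 l2 a m i = a i := if_pos h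

lemma starLen_self : starLen l1 l2 a m m = l1 := by simp [starLen]

lemma starLen_succ_self : starLen l1 l2 a m (m + 1) = l2 := by simp [starLen]

lemma starLen_of_gt {i : ℕ} (h : m + 1 < i) : starLen l1 l2 a m i = 0 := by
  simp only [starLen]
  split_ifs <;> omega

lemma mem_twoRow_of_star {i j : ℕ}
    (h : starLo l1 m (m + i) ≤ j ∧ j < starLo l1 m (m + i) + starLen l1 l2 a m (m + i)) :
    (i, j) ∈ twoRow l1 l2 := by
  rw [twoRow, YoungDiagram.mem_ofRowLens]
  rcases i with _ | _ | i <;> simp [starLo, starLen] at h ⊢ <;> omega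

lemma star_of_mem_twoRow (hl : l2 ≤ l1) {i j : ℕ} (h : (i, j) ∈ twoRow l1 l2) :
    starLo l1 m (m + i) ≤ j ∧ j < starLo l1 m (m + i) + starLen l1 l2 a m (m + i) := by
  rw [twoRow, YoungDiagram.mem_ofRowLens] at h
  rcases i with _ | _ | i <;> simp [starLo, starLen] at h ⊢ <;> omega

variable (m a) in
def starTab (T : SemistandardYoungTableau (twoRow l1 l2)) :
    SkewTab (starLo l1 m) (starLen l1 l2 a m) where
  entry i j :=
    if starLo l1 m i ≤ j ∧ j < starLo l1 m i + starLen l1 l2 a m i then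
      if i < m then i else T (i - m) j
    else 0
  rowWeak i j1 j2 h1 h12 h2 := by
    rw [if_pos (And.intro h1 (by omega)), if_pos (And.intro (by omega) h2)]
    split_ifs with hi
    · exact le_rfl
    · refine T.row_weak_of_le h12 (mem_twoRow_of_star (m := m) (a := a) ?_)
      rw [Nat.add_sub_cancel' (not_lt.1 hi)]
      exact ⟨by omega, h2⟩
  colStrict i j h1 h2 h3 h4 := by
    rw [if_pos (And.intro h1 h2), if_pos (And.intro h3 h4)]
    obtain hi | hi | rfl | hi : i + 1 < m ∨ i + 1 = m ∨ i = m ∨ m < i := by omega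
    · simp only [if_pos hi, if_pos (show i < m by omega)]
      omega
    · subst hi
      simp [starLo, starLen] at h1 h4
      omega
    · simp only [lt_irrefl, if_false, show ¬ i + 1 < i by omega, Nat.sub_self,
        Nat.add_sub_cancel_left]
      exact T.col_strict Nat.zero_lt_one (mem_twoRow_of_star (m := i) (a := a) ⟨h3, h4⟩)
    · rw [starLen_of_gt (by omega)] at h4
      omega
  zeros i j h := if_neg h

def SkewTab.lambdaPart (hl : l2 ≤ l1)
    (S : SkewTab (starLo l1 m) (starLen l1 l2 a m)) : SemistandardYoungTableau (twoRow l1 l2) where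
  entry i j := S.entry (m + i) j
  row_weak' {i j1 j2} hj hmem := by
    obtain ⟨h1, h2⟩ := star_of_mem_twoRow (m := m) (a := a) hl hmem
    exact S.rowWeak _ _ _ (by simp [starLo] at h1 ⊢) hj.le h2
  col_strict' {i1 i2 j} hi hmem := by
    obtain ⟨h3, h4⟩ := star_of_mem_twoRow (m := m) (a := a) hl hmem
    obtain rfl : i2 = 1 := by
      rcases i2 with _ | _ | i2 <;> simp [starLo, starLen] at h4 ⊢; omega
    obtain rfl : i1 = 0 := by omega
    exact S.colStrict _ j (by simp [starLo]) (by simp [starLo, starLen] at h4 ⊢; omega) h3 h4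
  zeros' hmem := S.zeros _ _ fun h => hmem (mem_twoRow_of_star h)

lemma starTab_entry (T : SemistandardYoungTableau (twoRow l1 l2)) {i j : ℕ}
    (h1 : starLo l1 m i ≤ j) (h2 : j < starLo l1 m i + starLen l1 l2 a m i) :
    (starTab m a T).entry i j = if i < m then i else T (i - m) j :=
  if_pos ⟨h1, h2⟩

def AlphaCanonical (S : SkewTab (starLo l1 m) (starLen l1 l2 a m)) : Prop :=
  ∀ i < m, ∀ j, l1 ≤ j → j < l1 + a i → S.entry i j = i

lemma flatMap_rowWord_eq_alphaWord (S : SkewTab (starLo l1 m) (starLen l1 l2 a m)) {i : ℕ}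
    (hi : i ≤ m) (h : ∀ k < i, ∀ j, l1 ≤ j → j < l1 + a k → S.entry k j = k) :
    (List.range i).flatMap S.rowWord = alphaWord a i := by
  refine List.flatMap_congr fun k hk => ?_
  have hk : k < i := List.mem_range.1 hk
  rw [S.rowWord_eq_replicate (c := k), starLen_of_lt (by omega)]
  rw [starLo_of_lt (by omega), starLen_of_lt (by omega)]
  exact h k hk

lemma readWord_star (S : SkewTab (starLo l1 m) (starLen l1 l2 a m)) :
    readWord _ _ (m + 2) S =
      (List.range m).flatMap S.rowWord ++ (S.rowWord m ++ S.rowWord (m + 1)) := by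
  simp [SkewTab.readWord_eq_flatMap, List.range_succ]

lemma content_lambdaPart (hl : l2 ≤ l1) (S : SkewTab (starLo l1 m) (starLen l1 l2 a m))
    (v : ℕ) :
    content (S.lambdaPart hl) v = (S.rowWord m ++ S.rowWord (m + 1)).count v := by
  rw [content_twoRow, max_eq_left hl, List.count_append, SkewTab.count_rowWord,
    SkewTab.count_rowWord, rowContent, rowContent, starLo_of_le le_rfl,
    starLo_of_le (by omega), starLen_self, starLen_succ_self]
  simp only [zero_add, ← range_eq_Ico]
  rfl

lemma skewContent_of_alphaCanonical (hl : l2 ≤ l1) (ha0 : ∀ v, m ≤ v → a v = 0)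
    {S : SkewTab (starLo l1 m) (starLen l1 l2 a m)} (hS : AlphaCanonical S) (v : ℕ) :
    skewContent _ _ (m + 2) S v = a v + content (S.lambdaPart hl) v := by
  rw [← SkewTab.count_readWord, readWord_star, List.count_append,
    flatMap_rowWord_eq_alphaWord S le_rfl hS, count_alphaWord_of_vanishing ha0,
    content_lambdaPart]

lemma isLattice_of_alphaCanonical (hl : l2 ≤ l1)
    (ha : ∀ v, a v = mu (v + 1) + a (v + 1)) (ha0 : ∀ v, m ≤ v → a v = 0)
    {S : SkewTab (starLo l1 m) (starLen l1 l2 a m)} (hS : AlphaCanonical S)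
    (hT : ∀ v, content (S.lambdaPart hl) v = mu v) :
    IsLattice (readWord _ _ (m + 2) S) := by
  have hcount := count_alphaWord_of_vanishing ha0
  rw [readWord_star, flatMap_rowWord_eq_alphaWord S le_rfl hS]
  refine IsLattice.append (IsLattice.of_pairwise_le (pairwise_alphaWord a m) fun v => ?_)
    fun v => ?_
  · rw [hcount, hcount, ha v]
    omega
  · rw [hcount, hcount, ← content_lambdaPart hl, hT, ha v, add_comm]

lemma alphaCanonical_starTab (T : SemistandardYoungTableau (twoRow l1 l2)) :
    AlphaCanonical (starTab m a T) := fun i hi j hj1 hj2 => by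
  rw [starTab_entry T (by rw [starLo_of_lt hi]; exact hj1)
    (by rw [starLo_of_lt hi, starLen_of_lt hi]; exact hj2), if_pos hi]

lemma lambdaPart_starTab (hl : l2 ≤ l1) (T : SemistandardYoungTableau (twoRow l1 l2)) :
    (starTab m a T).lambdaPart hl = T := by
  ext i j
  by_cases hmem : (i, j) ∈ twoRow l1 l2
  · obtain ⟨h1, h2⟩ := star_of_mem_twoRow (m := m) (a := a) hl hmem
    exact (starTab_entry T h1 h2).trans (by simp)
  · exact ((starTab m a T).zeros _ _ fun h => hmem (mem_twoRow_of_star h)).trans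
      (T.zeros hmem).symm

lemma starTab_lambdaPart (hl : l2 ≤ l1) {S : SkewTab (starLo l1 m) (starLen l1 l2 a m)}
    (hS : AlphaCanonical S) : starTab m a (S.lambdaPart hl) = S := by
  ext i j
  by_cases hij : starLo l1 m i ≤ j ∧ j < starLo l1 m i + starLen l1 l2 a m i
  · rw [starTab_entry _ hij.1 hij.2]
    split_ifs with hi
    · rw [starLo_of_lt hi, starLen_of_lt hi] at hij
      exact (hS i hi j hij.1 hij.2).symm
    · exact congrArg (S.entry · j) (Nat.add_sub_cancel' (not_lt.1 hi))
  · rw [(starTab m a _).zeros _ _ hij, S.zeros _ _ hij]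

lemma alphaCanonical_of_isLattice (ha : Antitone a)
    {S : SkewTab (starLo l1 m) (starLen l1 l2 a m)} (hS : IsLattice (readWord _ _ (m + 2) S)) :
    AlphaCanonical S := by
  intro i
  induction i using Nat.strong_induction_on with
  | _ i ih =>
  intro hi j hj1 hj2
  obtain ⟨t, ht⟩ : ∃ t, a i = t + 1 := ⟨a i - 1, by omega⟩
  have hlo : starLo l1 m i = l1 := starLo_of_lt hi
  have hlen : starLen l1 l2 a m i = t + 1 := (starLen_of_lt hi).trans ht
  -- the rightmost entry of row `i` is read right after the rows above it
  have hlast : S.entry i (l1 + t) ≤ i := by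
    by_contra! hgt
    obtain ⟨R, hR⟩ := exists_flatMap_range_eq_append S.rowWord (show i < m + 2 by omega)
    obtain ⟨R', hR'⟩ := S.exists_rowWord_eq_cons hlen
    rw [SkewTab.readWord_eq_flatMap, hR, hR', hlo, List.cons_append,
      flatMap_rowWord_eq_alphaWord S hi.le fun k hk => ih k hk (by omega)] at hS
    have := lt_of_mem_alphaWord (hS.pred_mem (by omega))
    omega
  have hle := S.rowWeak i j (l1 + t) (by omega) (by omega) (by omega)
  have hge : i ≤ S.entry i j := S.le_entry fun k hk => by
    rw [starLo_of_lt (by omega), starLen_of_lt (by omega)]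
    exact ⟨hj1, by have := ha hk; omega⟩
  omega

def lrEquiv (hl : l2 ≤ l1) (ha : ∀ v, a v = mu (v + 1) + a (v + 1))
    (ha0 : ∀ v, m ≤ v → a v = 0) :
    {T : SemistandardYoungTableau (twoRow l1 l2) // ∀ v, content T v = mu v} ≃
      {S : SkewTab (starLo l1 m) (starLen l1 l2 a m) //
        IsLattice (readWord _ _ (m + 2) S) ∧ ∀ v, skewContent _ _ (m + 2) S v = mu v + a v} :=
  have hanti : Antitone a := antitone_nat_of_succ_le fun v => by rw [ha v]; omega
  { toFun T := ⟨starTab m a T,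
      isLattice_of_alphaCanonical hl ha ha0 (alphaCanonical_starTab T.1)
        (by rw [lambdaPart_starTab]; exact T.2),
      fun v => by
        rw [skewContent_of_alphaCanonical hl ha0 (alphaCanonical_starTab T.1),
          lambdaPart_starTab, T.2, add_comm]⟩
    invFun S := ⟨S.1.lambdaPart hl, fun v => by
      have := skewContent_of_alphaCanonical hl ha0 (alphaCanonical_of_isLattice hanti S.2.1) v
      rw [S.2.2] at this
      omega⟩
    left_inv T := Subtype.ext (lambdaPart_starTab hl T.1)
    right_inv S := Subtype.ext (starTab_lambdaPart hl (alphaCanonical_of_isLattice hanti S.2.1)) }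

end StarShape

theorem stmt9_general (l1 l2 L : ℕ) (hl : l2 ≤ l1) (hL : 1 ≤ L) (mu : ℕ → ℕ)
    (hmu : ∀ i, L ≤ i → mu i = 0) :
    ∃ e : {T : SemistandardYoungTableau (twoRow l1 l2) // ∀ v, content T v = mu v} ≃
          {S : SkewTab (starLo l1 (L - 1)) (starLen l1 l2 (fun i => ∑ w ∈ Finset.Ico (i + 1) L, mu w) (L - 1)) //
            IsLattice (readWord (starLo l1 (L - 1)) (starLen l1 l2 (fun i => ∑ w ∈ Finset.Ico (i + 1) L, mu w) (L - 1)) (L + 1) S) ∧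
            ∀ v, skewContent (starLo l1 (L - 1)) (starLen l1 l2 (fun i => ∑ w ∈ Finset.Ico (i + 1) L, mu w) (L - 1)) (L + 1) S v =
              ∑ w ∈ Finset.Ico v L, mu w},
      ∀ T i j, starLo l1 (L - 1) i ≤ j →
        j < starLo l1 (L - 1) i + starLen l1 l2 (fun i => ∑ w ∈ Finset.Ico (i + 1) L, mu w) (L - 1) i →
        (e T : SkewTab (starLo l1 (L - 1)) (starLen l1 l2 (fun i => ∑ w ∈ Finset.Ico (i + 1) L, mu w) (L - 1))).entry i j =
          if i < L - 1 then i
          else (T : SemistandardYoungTableau (twoRow l1 l2)) (i - (L - 1)) j := by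
  have hnu : ∀ v, ∑ w ∈ Ico v L, mu w = mu v + ∑ w ∈ Ico (v + 1) L, mu w := fun v => by
    rcases lt_or_ge v L with hv | hv
    · exact sum_eq_sum_Ico_succ_bot hv mu
    · simp [hmu v hv, Ico_eq_empty_of_le hv, Ico_eq_empty_of_le (hv.trans v.le_succ)]
  obtain ⟨m, rfl⟩ : ∃ m, L = m + 1 := ⟨L - 1, by omega⟩
  have ha0 : ∀ v, m ≤ v → ∑ w ∈ Ico (v + 1) (m + 1), mu w = 0 := fun v hv => by
    rw [Ico_eq_empty_of_le (by omega), sum_empty]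
  -- `m + 1 - 1` and `m` agree only definitionally, hence the closing `Iff.rfl`
  exact ⟨(lrEquiv hl (fun v => hnu (v + 1)) ha0).trans (Equiv.subtypeEquivRight fun S =>
      and_congr_right' (forall_congr' fun v => by rw [hnu v]; exact Iff.rfl)),
    fun T i j h1 h2 => starTab_entry T.1 h1 h2⟩

/-- The map `T ↦ S(T)` (place `T` on the `λ`-part, fill row `i` of the
`α`-part with `i`'s) is a bijection between SSYT of shape `λ = (l1, l2)` and content `μ`,
and LR skew tableaux of shape `λ*α` and content `ν`. -/
theorem stmt9 (l1 l2 L : ℕ) (hl : l2 ≤ l1) (hL : 1 ≤ L) (mu : ℕ → ℕ)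
    (hmu : ∀ i, L ≤ i → mu i = 0) (hsum : l1 + l2 = ∑ j ∈ Finset.range L, mu j) :
    ∃ e : {T : SemistandardYoungTableau (twoRow l1 l2) // ∀ v, content T v = mu v} ≃
          {S : SkewTab (starLo l1 (L - 1)) (starLen l1 l2 (fun i => ∑ w ∈ Finset.Ico (i + 1) L, mu w) (L - 1)) //
            IsLattice (readWord (starLo l1 (L - 1)) (starLen l1 l2 (fun i => ∑ w ∈ Finset.Ico (i + 1) L, mu w) (L - 1)) (L + 1) S) ∧
            ∀ v, skewContent (starLo l1 (L - 1)) (starLen l1 l2 (fun i => ∑ w ∈ Finset.Ico (i + 1) L, mu w) (L - 1)) (L + 1) S v =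
              ∑ w ∈ Finset.Ico v L, mu w},
      ∀ T i j, starLo l1 (L - 1) i ≤ j →
        j < starLo l1 (L - 1) i + starLen l1 l2 (fun i => ∑ w ∈ Finset.Ico (i + 1) L, mu w) (L - 1) i →
        (e T : SkewTab (starLo l1 (L - 1)) (starLen l1 l2 (fun i => ∑ w ∈ Finset.Ico (i + 1) L, mu w) (L - 1))).entry i j =
          if i < L - 1 then i
          else (T : SemistandardYoungTableau (twoRow l1 l2)) (i - (L - 1)) j :=
  stmt9_general l1 l2 L hl hL mu hmu
end
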